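/- Let D ⊆ {(x,r) ∈ ℝ² : r > 0} be open and let ρ, u, v ∈ C²(D) with ρ > 0 on D satisfy pointwise the steady axisymmetric isentropic Euler system: ∂_x(rρu) + ∂_r(rρv) = 0, ∂_x(rρu²) + ∂_r(rρuv) + r∂_x(P(ρ)) = 0, ∂_x(rρuv) + ∂_r(rρv²) + r∂_r(P(ρ)) = 0. Then the quantity ω/(ρr), where ω = ∂_xv − ∂_ru is the vorticity, is transported by the flow: u∂_x(ω/(ρr)) + v∂_r(ω/(ρr)) = 0 at every point of D. -/

import Mathlib

open scoped Topology
open Filter Set MeasureTheory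

noncomputable section

/-- Partial derivative in the axial (`x`) direction for functions on `ℝ × ℝ`. -/
def pdX (F : ℝ × ℝ → ℝ) (p : ℝ × ℝ) : ℝ := fderiv ℝ F p (1, 0)

/-- Partial derivative in the radial (`r`) direction for functions on `ℝ × ℝ`. -/
def pdR (F : ℝ × ℝ → ℝ) (p : ℝ × ℝ) : ℝ := fderiv ℝ F p (0, 1)

/-- Pressure `P(ρ) = ρ^γ/γ`. -/
def Pres (γ ρ : ℝ) : ℝ := ρ ^ γ / γ

/-- Enthalpy `h(ρ) = ρ^(γ-1)/(γ-1)`. -/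
def enth (γ ρ : ℝ) : ℝ := ρ ^ (γ - 1) / (γ - 1)

/-- Sound speed `c(ρ) = ρ^((γ-1)/2)`. -/
def sound (γ ρ : ℝ) : ℝ := ρ ^ ((γ - 1) / 2)

/-- Meridian domain `Ω = {(x,r) : r > f(x)}`. -/
def mdom (f : ℝ → ℝ) : Set (ℝ × ℝ) := {p | f p.1 < p.2}

/-- `α`-Hölder continuity (with some constant) on a set, for functions on `ℝ²`. -/
def HolderOn (α : ℝ) (g : ℝ × ℝ → ℝ) (s : Set (ℝ × ℝ)) : Prop :=
  ∃ C : ℝ, ∀ p ∈ s, ∀ q ∈ s, |g p - g q| ≤ C * dist p q ^ α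

/-- `α`-Hölder continuity (with some constant) on a set, for functions on `ℝ`. -/
def HolderOn1 (α : ℝ) (g : ℝ → ℝ) (s : Set ℝ) : Prop :=
  ∃ C : ℝ, ∀ p ∈ s, ∀ q ∈ s, |g p - g q| ≤ C * |p - q| ^ α

/-- `g ∈ C^{1,α}(Ω) ∩ C^{α}(Ω̄)`: differentiable in `Ω` with locally `α`-Hölder
partial derivatives, and `α`-Hölder continuous up to the boundary. -/
def C1HolderOn (α : ℝ) (g : ℝ × ℝ → ℝ) (Ω : Set (ℝ × ℝ)) : Prop :=
  DifferentiableOn ℝ g Ω ∧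
  (∀ K : Set (ℝ × ℝ), IsCompact K → K ⊆ Ω → HolderOn α (pdX g) K ∧ HolderOn α (pdR g) K) ∧
  HolderOn α g (closure Ω)

/-- The steady axisymmetric isentropic Euler system, pointwise at `p = (x,r)`. -/
def EulerAt (γ : ℝ) (ρ u v : ℝ × ℝ → ℝ) (p : ℝ × ℝ) : Prop :=
  pdX (fun q => q.2 * ρ q * u q) p + pdR (fun q => q.2 * ρ q * v q) p = 0 ∧
  pdX (fun q => q.2 * ρ q * u q ^ 2) p + pdR (fun q => q.2 * ρ q * u q * v q) p
      + p.2 * pdX (fun q => Pres γ (ρ q)) p = 0 ∧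
  pdX (fun q => q.2 * ρ q * u q * v q) p + pdR (fun q => q.2 * ρ q * v q ^ 2) p
      + p.2 * pdR (fun q => Pres γ (ρ q)) p = 0

/-! Since `∇P(ρ) = ρ ∇h(ρ)`, subtracting `u` resp. `v` times the continuity equation from the
momentum equations and dividing by `ρr` leaves `(u·∇)u + ∇h(ρ) = 0`. Its curl kills the gradient and gives
`(u·∇)ω + ω div u = 0`, while the continuity equation reads `(u·∇)(ρr) + ρr div u = 0`.
Two densities obeying the same law have a transported ratio, whence `(u·∇)(ω/(ρr)) = 0`. -/

open ContinuousLinearMap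

section DirectionalDerivative

variable {E : Type*} [NormedAddCommGroup E] [NormedSpace ℝ E] {f g : E → ℝ} {x : E}

theorem fderiv_fun_mul_apply (hf : DifferentiableAt ℝ f x) (hg : DifferentiableAt ℝ g x) (e : E) :
    fderiv ℝ (fun y => f y * g y) x e = fderiv ℝ f x e * g x + f x * fderiv ℝ g x e := by
  simp only [fderiv_fun_mul hf hg, add_apply, smul_apply, smul_eq_mul]
  ring

theorem fderiv_comp_apply_of_hasDerivAt {φ : ℝ → ℝ} {φ' : ℝ} (hφ : HasDerivAt φ φ' (f x))
    (hf : DifferentiableAt ℝ f x) (e : E) :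
    fderiv ℝ (fun y => φ (f y)) x e = φ' * fderiv ℝ f x e := by
  have h : HasFDerivAt (fun y => φ (f y)) (φ' • fderiv ℝ f x) x :=
    hφ.comp_hasFDerivAt x hf.hasFDerivAt
  rw [h.fderiv, smul_apply, smul_eq_mul]

theorem ContDiffAt.differentiableAt_fderiv_apply (hf : ContDiffAt ℝ 2 f x) (e : E) :
    DifferentiableAt ℝ (fun y => fderiv ℝ f y e) x :=
  ((hf.fderiv_right (m := 1) one_add_one_eq_two.le).differentiableAt one_ne_zero).clm_apply
    (differentiableAt_const e)

theorem ContDiffAt.fderiv_fderiv_apply_comm (hf : ContDiffAt ℝ 2 f x) (e e' : E) :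
    fderiv ℝ (fun y => fderiv ℝ f y e) x e' = fderiv ℝ (fun y => fderiv ℝ f y e') x e := by
  have hf' := (hf.fderiv_right (m := 1) one_add_one_eq_two.le).differentiableAt one_ne_zero
  simp only [fderiv_clm_apply hf' (differentiableAt_const _), fderiv_const_apply, comp_zero,
    zero_add, flip_apply]
  exact hf.isSymmSndFDerivAt (by simp) e' e

theorem fderiv_apply_eq_zero_of_eventuallyEq_zero (h : f =ᶠ[𝓝 x] 0) (e : E) :
    fderiv ℝ f x e = 0 := by
  rw [h.fderiv_eq, fderiv_zero, Pi.zero_apply, zero_apply]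

end DirectionalDerivative

def materialDeriv (u v F : ℝ × ℝ → ℝ) (p : ℝ × ℝ) : ℝ := u p * pdX F p + v p * pdR F p

def divergence (U V : ℝ × ℝ → ℝ) (p : ℝ × ℝ) : ℝ := pdX U p + pdR V p

def curl (U V : ℝ × ℝ → ℝ) (p : ℝ × ℝ) : ℝ := pdX V p - pdR U p

section PlaneCalculus

variable {u v F : ℝ × ℝ → ℝ} {p : ℝ × ℝ}

theorem materialDeriv_eq_fderiv : materialDeriv u v F p = fderiv ℝ F p (u p, v p) := by
  have hV : (u p, v p) = u p • ((1, 0) : ℝ × ℝ) + v p • (0, 1) := by simp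
  rw [hV, map_add, map_smul, map_smul, smul_eq_mul, smul_eq_mul]
  rfl

theorem divergence_mul {a U V : ℝ × ℝ → ℝ} (ha : DifferentiableAt ℝ a p)
    (hU : DifferentiableAt ℝ U p) (hV : DifferentiableAt ℝ V p) :
    divergence (fun q => a q * U q) (fun q => a q * V q) p
      = materialDeriv U V a p + a p * divergence U V p := by
  simp only [divergence, materialDeriv, pdX, pdR, fderiv_fun_mul_apply ha hU,
    fderiv_fun_mul_apply ha hV]
  ring

theorem curl_materialDeriv_add_grad {H : ℝ × ℝ → ℝ} (hu : ContDiffAt ℝ 2 u p)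
    (hv : ContDiffAt ℝ 2 v p) (hH : ContDiffAt ℝ 2 H p) :
    curl (fun q => materialDeriv u v u q + pdX H q) (fun q => materialDeriv u v v q + pdR H q) p
      = materialDeriv u v (curl u v) p + curl u v p * divergence u v p := by
  have hu₁ := hu.differentiableAt two_ne_zero
  have hv₁ := hv.differentiableAt two_ne_zero
  have hXu := hu.differentiableAt_fderiv_apply (1, 0)
  have hRu := hu.differentiableAt_fderiv_apply (0, 1)
  have hXv := hv.differentiableAt_fderiv_apply (1, 0)
  have hRv := hv.differentiableAt_fderiv_apply (0, 1)
  have hXH := hH.differentiableAt_fderiv_apply (1, 0)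
  have hRH := hH.differentiableAt_fderiv_apply (0, 1)
  unfold curl materialDeriv divergence pdX pdR
  rw [fderiv_fun_add (by fun_prop) hRH, fderiv_fun_add (by fun_prop) hXH,
    fderiv_fun_add (by fun_prop) (by fun_prop), fderiv_fun_add (by fun_prop) (by fun_prop),
    fderiv_fun_sub hXv hRu]
  simp only [add_apply, sub_apply, fderiv_fun_mul_apply hu₁ hXv, fderiv_fun_mul_apply hv₁ hRv,
    fderiv_fun_mul_apply hu₁ hXu, fderiv_fun_mul_apply hv₁ hRu,
    hu.fderiv_fderiv_apply_comm (1, 0) (0, 1), hv.fderiv_fderiv_apply_comm (0, 1) (1, 0),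
    hH.fderiv_fderiv_apply_comm (0, 1) (1, 0)]
  ring

theorem materialDeriv_div_eq_zero {ω m : ℝ × ℝ → ℝ} {d : ℝ} (hω : DifferentiableAt ℝ ω p)
    (hm : DifferentiableAt ℝ m p) (hm₀ : m p ≠ 0)
    (hωd : materialDeriv u v ω p + ω p * d = 0) (hmd : materialDeriv u v m p + m p * d = 0) :
    materialDeriv u v (fun q => ω q / m q) p = 0 := by
  simp only [materialDeriv_eq_fderiv] at *
  simp only [div_eq_mul_inv, fderiv_fun_mul_apply hω (hm.fun_inv hm₀),
    fderiv_comp_apply_of_hasDerivAt (hasDerivAt_inv hm₀) hm]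
  field_simp
  linear_combination m p * hωd - ω p * hmd

end PlaneCalculus

section Polytropic

variable {γ s : ℝ}

theorem hasDerivAt_pres (hγ : γ ≠ 0) (hs : s ≠ 0) : HasDerivAt (Pres γ) (s ^ (γ - 1)) s := by
  have h := (Real.hasDerivAt_rpow_const (p := γ) (Or.inl hs)).div_const γ
  rwa [mul_div_cancel_left₀ _ hγ] at h

theorem hasDerivAt_enth (hγ : γ ≠ 1) (hs : s ≠ 0) :
    HasDerivAt (enth γ) (s ^ (γ - 1) / s) s := by
  have h := (Real.hasDerivAt_rpow_const (p := γ - 1) (Or.inl hs)).div_const (γ - 1)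
  rwa [mul_div_cancel_left₀ _ (sub_ne_zero.mpr hγ), Real.rpow_sub_one hs] at h

theorem contDiffAt_enth {n : WithTop ℕ∞} (hs : s ≠ 0) : ContDiffAt ℝ n (enth γ) s :=
  (Real.contDiffAt_rpow_const_of_ne hs).div_const _

theorem fderiv_pres_comp_apply {E : Type*} [NormedAddCommGroup E] [NormedSpace ℝ E]
    {ρ : E → ℝ} {x : E} (hγ₀ : γ ≠ 0) (hγ₁ : γ ≠ 1) (hρ : DifferentiableAt ℝ ρ x)
    (hρ₀ : ρ x ≠ 0) (e : E) :
    fderiv ℝ (fun y => Pres γ (ρ y)) x e = ρ x * fderiv ℝ (fun y => enth γ (ρ y)) x e := by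
  rw [fderiv_comp_apply_of_hasDerivAt (hasDerivAt_pres hγ₀ hρ₀) hρ,
    fderiv_comp_apply_of_hasDerivAt (hasDerivAt_enth hγ₁ hρ₀) hρ]
  field_simp

end Polytropic

namespace EulerAt

variable {γ : ℝ} {ρ u v : ℝ × ℝ → ℝ} {p : ℝ × ℝ}

theorem continuity (h : EulerAt γ ρ u v p) (hρ : DifferentiableAt ℝ ρ p)
    (hu : DifferentiableAt ℝ u p) (hv : DifferentiableAt ℝ v p) :
    materialDeriv u v (fun q => ρ q * q.2) p + ρ p * p.2 * divergence u v p = 0 := by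
  have hmass := divergence_mul (hρ.fun_mul differentiableAt_snd) hu hv
  simp only [mul_comm (ρ _) (Prod.snd _)] at hmass ⊢
  rw [← hmass]
  exact h.1

theorem momentum (h : EulerAt γ ρ u v p) (hγ₀ : γ ≠ 0) (hγ₁ : γ ≠ 1) (hp : p.2 ≠ 0)
    (hρ₀ : ρ p ≠ 0) (hρ : DifferentiableAt ℝ ρ p) (hu : DifferentiableAt ℝ u p)
    (hv : DifferentiableAt ℝ v p) :
    materialDeriv u v u p + pdX (fun q => enth γ (ρ q)) p = 0 ∧
      materialDeriv u v v p + pdR (fun q => enth γ (ρ q)) p = 0 := by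
  obtain ⟨hmass, hx, hr⟩ := h
  have hm : DifferentiableAt ℝ (fun q : ℝ × ℝ => q.2 * ρ q) p := differentiableAt_snd.mul hρ
  have flux : ∀ w : ℝ × ℝ → ℝ, DifferentiableAt ℝ w p →
      divergence (fun q => w q * (q.2 * ρ q * u q)) (fun q => w q * (q.2 * ρ q * v q)) p
        = p.2 * ρ p * materialDeriv u v w p := by
    intro w hw
    rw [divergence_mul hw (hm.fun_mul hu) (hm.fun_mul hv), show divergence _ _ p = 0 from hmass]
    simp only [materialDeriv]
    ring
  have hrρ : p.2 * ρ p ≠ 0 := mul_ne_zero hp hρ₀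
  constructor
  · rw [show (fun q : ℝ × ℝ => q.2 * ρ q * u q ^ 2) = fun q => u q * (q.2 * ρ q * u q) by
        ext; ring,
      show (fun q : ℝ × ℝ => q.2 * ρ q * u q * v q) = fun q => u q * (q.2 * ρ q * v q) by
        ext; ring] at hx
    rw [show pdX _ p + pdR _ p = _ from flux u hu, pdX, fderiv_pres_comp_apply hγ₀ hγ₁ hρ hρ₀]
      at hx
    rw [pdX]
    exact (mul_eq_zero.mp (by linear_combination hx)).resolve_left hrρ
  · rw [show (fun q : ℝ × ℝ => q.2 * ρ q * u q * v q) = fun q => v q * (q.2 * ρ q * u q) by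
        ext; ring,
      show (fun q : ℝ × ℝ => q.2 * ρ q * v q ^ 2) = fun q => v q * (q.2 * ρ q * v q) by
        ext; ring] at hr
    rw [show pdX _ p + pdR _ p = _ from flux v hv, pdR, fderiv_pres_comp_apply hγ₀ hγ₁ hρ hρ₀]
      at hr
    rw [pdR]
    exact (mul_eq_zero.mp (by linear_combination hr)).resolve_left hrρ

end EulerAt

/-- **Vorticity transport.** If `(ρ,u,v)` is a `C²` positive-density solution of the steady
axisymmetric isentropic Euler system on an open set `D ⊆ {r > 0}`, then the quantity
`ω/(ρr)` with `ω = ∂ₓv − ∂ᵣu` satisfies `u ∂ₓ(ω/(ρr)) + v ∂ᵣ(ω/(ρr)) = 0` on `D`. -/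
theorem vorticity_transport
    (γ : ℝ) (hγ : 1 < γ)
    (D : Set (ℝ × ℝ)) (hD : IsOpen D) (hDpos : ∀ p ∈ D, 0 < p.2)
    (ρ u v : ℝ × ℝ → ℝ)
    (hρ : ContDiffOn ℝ 2 ρ D) (hu : ContDiffOn ℝ 2 u D) (hv : ContDiffOn ℝ 2 v D)
    (hρpos : ∀ p ∈ D, 0 < ρ p)
    (heuler : ∀ p ∈ D, EulerAt γ ρ u v p) :
    ∀ p ∈ D,
      u p * pdX (fun q => (pdX v q - pdR u q) / (ρ q * q.2)) p
        + v p * pdR (fun q => (pdX v q - pdR u q) / (ρ q * q.2)) p = 0 := by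
  have hγ₀ : γ ≠ 0 := (zero_lt_one.trans hγ).ne'
  have hγ₁ : γ ≠ 1 := hγ.ne'
  intro p hp
  have hρp := hρ.contDiffAt (hD.mem_nhds hp)
  have hup := hu.contDiffAt (hD.mem_nhds hp)
  have hvp := hv.contDiffAt (hD.mem_nhds hp)
  have momentum : ∀ᶠ q in 𝓝 p, materialDeriv u v u q + pdX (fun y => enth γ (ρ y)) q = 0 ∧
      materialDeriv u v v q + pdR (fun y => enth γ (ρ y)) q = 0 := by
    filter_upwards [hD.mem_nhds hp] with q hq
    have hdiff {f : ℝ × ℝ → ℝ} (hf : ContDiffOn ℝ 2 f D) : DifferentiableAt ℝ f q :=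
      (hf.contDiffAt (hD.mem_nhds hq)).differentiableAt two_ne_zero
    exact (heuler q hq).momentum hγ₀ hγ₁ (hDpos q hq).ne' (hρpos q hq).ne' (hdiff hρ) (hdiff hu)
      (hdiff hv)
  have hH : ContDiffAt ℝ 2 (fun q => enth γ (ρ q)) p :=
    (contDiffAt_enth (hρpos p hp).ne').comp p hρp
  have vorticity : materialDeriv u v (curl u v) p + curl u v p * divergence u v p = 0 := by
    rw [← curl_materialDeriv_add_grad hup hvp hH, curl, pdX, pdR,
      fderiv_apply_eq_zero_of_eventuallyEq_zero (momentum.mono fun _ h => h.2),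
      fderiv_apply_eq_zero_of_eventuallyEq_zero (momentum.mono fun _ h => h.1), sub_zero]
  have mass := (heuler p hp).continuity (hρp.differentiableAt two_ne_zero)
    (hup.differentiableAt two_ne_zero) (hvp.differentiableAt two_ne_zero)
  show materialDeriv u v (fun q => curl u v q / (ρ q * q.2)) p = 0
  exact materialDeriv_div_eq_zero
    ((hvp.differentiableAt_fderiv_apply _).sub (hup.differentiableAt_fderiv_apply _))
    ((hρp.differentiableAt two_ne_zero).fun_mul differentiableAt_snd)
    (mul_ne_zero (hρpos p hp).ne' (hDpos p hp).ne') vorticity mass
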